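/- Let G be a finite connected simple graph and w an injective real-valued edge weight function. For every λ ∈ ℝ and every pair of vertices x, y of G: x and y are connected in the subgraph of the minimal spanning tree MST(G,w) consisting of its edges of weight at most λ if and only if x and y are connected in the subgraph of G consisting of all edges of G of weight at most λ. In other words, the λ-clusters (connected components of the level-λ subgraph) of G coincide with the connected components of the MST restricted to edges with label at most λ. -/

import Mathlib

open scoped BigOperators symmDiff

variable {V : Type*}

/-- The total weight of (the edges of) a graph `T`, for a weight function `w` on `Sym2 V`. -/
noncomputable def edgeWeight (w : Sym2 V → ℝ) (T : SimpleGraph V) : ℝ :=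
  ∑ᶠ e ∈ T.edgeSet, w e

/-- `T` is a spanning tree of `G`: a subgraph of `G` (on the same, full vertex set)
that is connected and acyclic. -/
def IsSpanningTree (G T : SimpleGraph V) : Prop := T ≤ G ∧ T.IsTree

/-- `T` is a minimal spanning tree of `G` with respect to the weights `w`. -/
def IsMST (G : SimpleGraph V) (w : Sym2 V → ℝ) (T : SimpleGraph V) : Prop :=
  IsSpanningTree G T ∧
    ∀ T' : SimpleGraph V, IsSpanningTree G T' → edgeWeight w T ≤ edgeWeight w T'

/-! If `ab` is an edge of `G` outside the minimal spanning tree `T`, then every edge `e` on the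
tree path from `a` to `b` satisfies `w e ≤ w ab`: otherwise exchanging `e` for `ab` would give a
lighter spanning tree. Hence every edge of `G` of weight at most `λ` is bridged by a path of `T`
through edges of weight at most `λ`, so both level graphs have the same reachability relation. -/

namespace SimpleGraph

theorem Reachable.of_forall_adj_reachable {H H' : SimpleGraph V}
    (h : ∀ ⦃a b : V⦄, H.Adj a b → H'.Reachable a b) {x y : V} (hxy : H.Reachable x y) :
    H'.Reachable x y := by
  rw [reachable_iff_reflTransGen] at hxy ⊢
  exact hxy.lift' id fun a b hab ↦ (reachable_iff_reflTransGen a b).mp (h hab)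

lemma IsTree.card_edgeSet_add_one [Finite V] {T : SimpleGraph V} (hT : T.IsTree) :
    T.edgeSet.ncard + 1 = Nat.card V :=
  (isTree_iff_connected_and_card.mp hT).2

/-- Exchange step: adding an edge `ab` to a tree closes a cycle with the tree path from `a`
to `b`, so removing any edge of that path gives a tree again. -/
theorem IsTree.sup_edge_deleteEdges_isTree [Finite V] {T : SimpleGraph V} (hT : T.IsTree)
    {a b : V} (hab : a ≠ b) (hnadj : ¬T.Adj a b) {p : T.Walk a b} (hp : p.IsPath)
    {e : Sym2 V} (he : e ∈ p.edges) : ((T ⊔ edge a b).deleteEdges {e}).IsTree := by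
  have hH : (T ⊔ edge a b).Adj a b := Or.inr (by simp [edge_adj, hab])
  set c := Walk.cons hH (p.mapLe le_sup_left).reverse
  have hc : c.IsCycle := by
    rw [Walk.cons_isCycle_iff, Walk.edges_reverse, List.mem_reverse, Walk.edges_mapLe_eq_edges]
    exact ⟨(hp.mapLe _).reverse, fun hab' ↦ hnadj (p.adj_of_mem_edges hab')⟩
  have hec : e ∈ c.edges := by simp [c, he]
  have hconn : ((T ⊔ edge a b).deleteEdges {e}).Connected := by
    have hbr : ¬(T ⊔ edge a b).IsBridge e := fun hbr ↦ hbr.notMem_edges_of_isCycle hc hec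
    induction e using Sym2.ind with
    | h u v => exact (hT.connected.mono le_sup_left).connected_delete_edge_of_not_isBridge hbr
  have heT : e ∈ T.edgeSet := p.edges_subset_edgeSet he
  have hcard : ((T ⊔ edge a b).deleteEdges {e}).edgeSet.ncard = T.edgeSet.ncard := by
    rw [edgeSet_deleteEdges, edgeSet_sup, edgeSet_edge_of_ne hab, Set.union_singleton,
      Set.ncard_sdiff_singleton_of_mem (Set.mem_insert_of_mem _ heT),
      Set.ncard_insert_of_notMem (T.mem_edgeSet.not.mpr hnadj) (Set.toFinite _)]
    rfl
  rw [isTree_iff_connected_and_card]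
  exact ⟨hconn, by rw [Nat.card_coe_set_eq, hcard]; exact hT.card_edgeSet_add_one⟩

end SimpleGraph

open SimpleGraph

section edgeWeight

variable [Finite V] (w : Sym2 V → ℝ) {T : SimpleGraph V}

lemma edgeWeight_sup_edge {a b : V} (hab : a ≠ b) (hnadj : ¬T.Adj a b) :
    edgeWeight w (T ⊔ edge a b) = w s(a, b) + edgeWeight w T := by
  rw [edgeWeight, edgeWeight, edgeSet_sup, edgeSet_edge_of_ne hab, Set.union_singleton,
    finsum_mem_insert _ (T.mem_edgeSet.not.mpr hnadj) (Set.toFinite _)]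

lemma edgeWeight_deleteEdges_singleton {e : Sym2 V} (he : e ∈ T.edgeSet) :
    w e + edgeWeight w (T.deleteEdges {e}) = edgeWeight w T := by
  rw [edgeWeight, edgeWeight, edgeSet_deleteEdges,
    ← finsum_mem_insert _ (fun h ↦ h.2 rfl) (Set.toFinite _), Set.insert_sdiff_singleton,
    Set.insert_eq_of_mem he]

end edgeWeight

/-- The cycle property of minimal spanning trees. -/
theorem IsMST.weight_le_of_mem_edges [Finite V] {G T : SimpleGraph V} {w : Sym2 V → ℝ}
    (hT : IsMST G w T) {a b : V} (hab : G.Adj a b) (hnadj : ¬T.Adj a b) {p : T.Walk a b}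
    (hp : p.IsPath) {e : Sym2 V} (he : e ∈ p.edges) : w e ≤ w s(a, b) := by
  have heT : e ∈ (T ⊔ edge a b).edgeSet := edgeSet_mono le_sup_left (p.edges_subset_edgeSet he)
  have hle : (T ⊔ edge a b).deleteEdges {e} ≤ G :=
    (deleteEdges_le _).trans (sup_le hT.1.1 ((edge_le_iff G).mpr (Or.inr hab)))
  have hmin := hT.2 _ ⟨hle, hT.1.2.sup_edge_deleteEdges_isTree hab.ne hnadj hp he⟩
  have hadd := edgeWeight_sup_edge w hab.ne hnadj
  have hdel := edgeWeight_deleteEdges_singleton w heT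
  linarith

/-- Its connected components are the `lam`-clusters of `H`. -/
def levelGraph (H : SimpleGraph V) (w : Sym2 V → ℝ) (lam : ℝ) : SimpleGraph V :=
  fromEdgeSet {e | e ∈ H.edgeSet ∧ w e ≤ lam}

section levelGraph

variable {H H' : SimpleGraph V} {w : Sym2 V → ℝ} {lam : ℝ}

lemma levelGraph_mono (h : H ≤ H') : levelGraph H w lam ≤ levelGraph H' w lam :=
  fromEdgeSet_mono fun _ he ↦ ⟨edgeSet_mono h he.1, he.2⟩

lemma SimpleGraph.Walk.reachable_levelGraph {a b : V} (p : H.Walk a b)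
    (hp : ∀ e ∈ p.edges, w e ≤ lam) : (levelGraph H w lam).Reachable a b :=
  ⟨p.transfer _ fun e he ↦ by
    rw [levelGraph, edgeSet_fromEdgeSet]
    exact ⟨⟨p.edges_subset_edgeSet he, hp e he⟩, H.not_isDiag_of_mem_edgeSet
      (p.edges_subset_edgeSet he)⟩⟩

end levelGraph

theorem IsMST.reachable_levelGraph_of_adj [Finite V] {G T : SimpleGraph V} {w : Sym2 V → ℝ}
    (hT : IsMST G w T) {lam : ℝ} {a b : V} (hab : G.Adj a b) (hw : w s(a, b) ≤ lam) :
    (levelGraph T w lam).Reachable a b := by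
  by_cases hTab : T.Adj a b
  · exact (Walk.cons hTab .nil).reachable_levelGraph (by simpa using hw)
  obtain ⟨p, hp, -⟩ := hT.1.2.existsUnique_path a b
  exact p.reachable_levelGraph fun e he ↦
    (hT.weight_le_of_mem_edges hab hTab hp he).trans hw

theorem mst_level_clusters_general [Fintype V] (G : SimpleGraph V)
    (w : Sym2 V → ℝ)
    (T : SimpleGraph V) (hT : IsMST G w T) (lam : ℝ) (x y : V) :
    (SimpleGraph.fromEdgeSet {e | e ∈ T.edgeSet ∧ w e ≤ lam}).Reachable x y ↔
      (SimpleGraph.fromEdgeSet {e | e ∈ G.edgeSet ∧ w e ≤ lam}).Reachable x y := by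
  change (levelGraph T w lam).Reachable x y ↔ (levelGraph G w lam).Reachable x y
  refine ⟨Reachable.mono (levelGraph_mono hT.1.1), Reachable.of_forall_adj_reachable ?_⟩
  intro a b hab
  rw [levelGraph, fromEdgeSet_adj] at hab
  exact hT.reachable_levelGraph_of_adj hab.1.1 hab.1.2

/-- for every level `λ`, the λ-clusters of `G` (components of the subgraph
of edges of weight `≤ λ`) coincide with the components of the MST restricted to the
edges of weight `≤ λ`. -/
theorem mst_level_clusters [Fintype V] (G : SimpleGraph V) (hG : G.Connected)
    (w : Sym2 V → ℝ) (hw : Set.InjOn w G.edgeSet)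
    (T : SimpleGraph V) (hT : IsMST G w T) (lam : ℝ) (x y : V) :
    (SimpleGraph.fromEdgeSet {e | e ∈ T.edgeSet ∧ w e ≤ lam}).Reachable x y ↔
      (SimpleGraph.fromEdgeSet {e | e ∈ G.edgeSet ∧ w e ≤ lam}).Reachable x y :=
  mst_level_clusters_general G w T hT lam x y
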